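/- (Finitely additive Halmos–Savage theorem) Let A be an algebra of subsets of Ω and M ⊆ ba(A). Then M is dominated by some positive bounded finitely additive measure λ (i.e., μ ≪ λ for all μ ∈ M) if and only if there exists a sequence (μₙ) in M and weights αₙ ≥ 0, ∑ₙ αₙ = 1 such that every μ ∈ M is absolutely continuous with respect to m = ∑ₙ αₙ |μₙ|/(1 ∨ ‖μₙ‖). -/

import Mathlib

open Set Filter Topology

variable {Ω : Type*}

/-- `𝒜` is an algebra of subsets of `Ω`. -/
def IsAlg (𝒜 : Set (Set Ω)) : Prop :=
  ∅ ∈ 𝒜 ∧ Set.univ ∈ 𝒜 ∧ (∀ A ∈ 𝒜, Aᶜ ∈ 𝒜) ∧ ∀ A ∈ 𝒜, ∀ B ∈ 𝒜, A ∪ B ∈ 𝒜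

/-- bounded finitely additive set function (element of ba(𝒜)). -/
def IsFinAdd (𝒜 : Set (Set Ω)) (μ : Set Ω → ℝ) : Prop :=
  μ ∅ = 0 ∧
  (∀ A ∈ 𝒜, ∀ B ∈ 𝒜, Disjoint A B → μ (A ∪ B) = μ A + μ B) ∧
  ∃ C : ℝ, ∀ A ∈ 𝒜, |μ A| ≤ C

def IsPos (𝒜 : Set (Set Ω)) (μ : Set Ω → ℝ) : Prop := ∀ A ∈ 𝒜, 0 ≤ μ A

def IsCtblAdd (𝒜 : Set (Set Ω)) (μ : Set Ω → ℝ) : Prop :=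
  ∀ A : ℕ → Set Ω, (∀ n, A n ∈ 𝒜) → Pairwise (Function.onFun Disjoint A) →
    (⋃ n, A n) ∈ 𝒜 → HasSum (fun n => μ (A n)) (μ (⋃ n, A n))

/-- total variation of `μ` on `A`. -/
noncomputable def tv (𝒜 : Set (Set Ω)) (μ : Set Ω → ℝ) (A : Set Ω) : ℝ :=
  sSup {x | ∃ B ∈ 𝒜, B ⊆ A ∧ x = μ B - μ (A \ B)}

noncomputable def tvNorm (𝒜 : Set (Set Ω)) (μ : Set Ω → ℝ) : ℝ := tv 𝒜 μ Set.univ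

/-- `ν ≪ μ`, absolute continuity in the ε-δ sense. -/
def AC (𝒜 : Set (Set Ω)) (ν μ : Set Ω → ℝ) : Prop :=
  ∀ ε > (0:ℝ), ∃ δ > (0:ℝ), ∀ E ∈ 𝒜, tv 𝒜 μ E < δ → tv 𝒜 ν E < ε

/-- `μ ⊥ ν`, singularity in the ε sense. -/
def Sing (𝒜 : Set (Set Ω)) (μ ν : Set Ω → ℝ) : Prop :=
  ∀ ε > (0:ℝ), ∃ B ∈ 𝒜, tv 𝒜 μ Bᶜ + tv 𝒜 ν B < ε

/-- normalized total variation `|μ|/(1 ∨ ‖μ‖)`. -/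
noncomputable def nvar (𝒜 : Set (Set Ω)) (μ : Set Ω → ℝ) (A : Set Ω) : ℝ :=
  tv 𝒜 μ A / (1 ⊔ tvNorm 𝒜 μ)

/-- membership in `𝐀(M)`: countable convex combinations of normalized variations. -/
def MemAM (𝒜 : Set (Set Ω)) (M : Set (Set Ω → ℝ)) (m : Set Ω → ℝ) : Prop :=
  ∃ (μ : ℕ → Set Ω → ℝ) (α : ℕ → ℝ),
    (∀ n, μ n ∈ M) ∧ (∀ n, 0 ≤ α n) ∧ HasSum α 1 ∧
    ∀ A : Set Ω, m A = ∑' n, α n * nvar 𝒜 (μ n) A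

/-- membership in `𝐋(M)`. -/
def MemLM (𝒜 : Set (Set Ω)) (M : Set (Set Ω → ℝ)) (ν : Set Ω → ℝ) : Prop :=
  ∃ m, MemAM 𝒜 M m ∧ AC 𝒜 ν m

/-- order on ba(𝒜). -/
def baLE (𝒜 : Set (Set Ω)) (μ ν : Set Ω → ℝ) : Prop := ∀ A ∈ 𝒜, μ A ≤ ν A

/-- λ-completion of 𝒜. -/
def Completion (𝒜 : Set (Set Ω)) (l : Set Ω → ℝ) : Set (Set Ω) :=
  {B | ∀ ε > (0:ℝ), ∃ A ∈ 𝒜, ∃ A' ∈ 𝒜, A ⊆ B ∧ B ⊆ A' ∧ l (A' \ A) < ε}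

/-- the extension `λ̄` to the completion. -/
noncomputable def extOf (𝒜 : Set (Set Ω)) (l : Set Ω → ℝ) (B : Set Ω) : ℝ :=
  sSup {x | ∃ A ∈ 𝒜, A ⊆ B ∧ x = l A}

/-- λ-atom. -/
def IsLAtom (𝒜 : Set (Set Ω)) (l : Set Ω → ℝ) (B : Set Ω) : Prop :=
  B ∈ 𝒜 ∧ 0 < l B ∧ ∀ A ∈ 𝒜, A ⊆ B → l A = 0 ∨ l (B \ A) = 0

/-- simple 𝒜-measurable function. -/
def IsSimple (𝒜 : Set (Set Ω)) (f : Ω → ℝ) : Prop :=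
  (Set.range f).Finite ∧ ∀ c : ℝ, f ⁻¹' {c} ∈ 𝒜

/-- integral of a simple function. -/
noncomputable def simpleInt (μ : Set Ω → ℝ) (f : Ω → ℝ) : ℝ :=
  ∑ᶠ c : ℝ, c * μ (f ⁻¹' {c})

/-- outer measure associated with l on 𝒜. -/
noncomputable def outerOf (𝒜 : Set (Set Ω)) (l : Set Ω → ℝ) (S : Set Ω) : ℝ :=
  sInf {x | ∃ A ∈ 𝒜, S ⊆ A ∧ x = l A}

/-- Dunford–Schwartz approximating sequence for `f`. -/
def ApproxSeq (𝒜 : Set (Set Ω)) (l : Set Ω → ℝ) (f : Ω → ℝ) (g : ℕ → Ω → ℝ) : Prop :=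
  (∀ n, IsSimple 𝒜 (g n)) ∧
  (∀ ε > (0:ℝ), ∃ N, ∀ p ≥ N, ∀ q ≥ N, simpleInt l (fun x => |g p x - g q x|) < ε) ∧
  (∀ ε > (0:ℝ), Tendsto (fun n => outerOf 𝒜 l {x | ε ≤ |g n x - f x|}) atTop (nhds 0))

/-- membership in L¹(l). -/
def MemL1 (𝒜 : Set (Set Ω)) (l : Set Ω → ℝ) (f : Ω → ℝ) : Prop :=
  ∃ g, ApproxSeq 𝒜 l f g

/-- the Dunford–Schwartz integral. -/
noncomputable def dsInt (𝒜 : Set (Set Ω)) (l : Set Ω → ℝ) (f : Ω → ℝ) : ℝ :=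
  sInf {I | ∃ g, ApproxSeq 𝒜 l f g ∧ Tendsto (fun n => simpleInt l (g n)) atTop (nhds I)}

/-- L¹ seminorm distance. -/
noncomputable def l1dist (𝒜 : Set (Set Ω)) (l : Set Ω → ℝ) (f h : Ω → ℝ) : ℝ :=
  dsInt 𝒜 l (fun x => |f x - h x|)

/-- membership in the L¹(l)-closure of a set C of functions. -/
def InL1Closure (𝒜 : Set (Set Ω)) (l : Set Ω → ℝ) (C : Set (Ω → ℝ)) (f : Ω → ℝ) : Prop :=
  ∀ ε > (0:ℝ), ∃ h ∈ C, l1dist 𝒜 l f h < ε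

/-- the set C = K − Sim(𝒜)₊. -/
def ConeDiff (𝒜 : Set (Set Ω)) (K : Set (Ω → ℝ)) : Set (Ω → ℝ) :=
  {f | ∃ k ∈ K, ∃ s : Ω → ℝ, IsSimple 𝒜 s ∧ (∀ x, 0 ≤ s x) ∧ f = k - s}

/-!
Given a dominating `l`, measure how much of `l` a positive `m` fails to control by
`singularMass 𝒜 l m`. It is antitone in `m`, so a countable convex combination of a minimising
sequence is a minimiser `m` in `𝐀(M)`. For `μ ∈ M`, the midpoint of `m` and `|μ| / (1 ∨ ‖μ‖)`
is again in `𝐀(M)`, so adding `|μ|` to `m` does not lower the singular mass; since `μ ≪ l`, this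
forces `μ ≪ m`. Conversely, every element of `𝐀(M)` is itself a positive bounded finitely
additive measure.
-/
open scoped Pointwise

namespace IsAlg

variable {𝒜 : Set (Set Ω)}

theorem empty_mem (hA : IsAlg 𝒜) : ∅ ∈ 𝒜 := hA.1

theorem univ_mem (hA : IsAlg 𝒜) : Set.univ ∈ 𝒜 := hA.2.1

theorem compl_mem (hA : IsAlg 𝒜) {A : Set Ω} (h : A ∈ 𝒜) : Aᶜ ∈ 𝒜 := hA.2.2.1 A h

theorem union_mem (hA : IsAlg 𝒜) {A B : Set Ω} (hAm : A ∈ 𝒜) (hBm : B ∈ 𝒜) : A ∪ B ∈ 𝒜 :=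
  hA.2.2.2 A hAm B hBm

theorem inter_mem (hA : IsAlg 𝒜) {A B : Set Ω} (hAm : A ∈ 𝒜) (hBm : B ∈ 𝒜) : A ∩ B ∈ 𝒜 := by
  simpa [Set.compl_union] using hA.compl_mem (hA.union_mem (hA.compl_mem hAm) (hA.compl_mem hBm))

theorem diff_mem (hA : IsAlg 𝒜) {A B : Set Ω} (hAm : A ∈ 𝒜) (hBm : B ∈ 𝒜) : A \ B ∈ 𝒜 :=
  hA.inter_mem hAm (hA.compl_mem hBm)

end IsAlg

namespace IsFinAdd

variable {𝒜 : Set (Set Ω)} {μ : Set Ω → ℝ} {A B : Set Ω}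

theorem add_diff (hA : IsAlg 𝒜) (hμ : IsFinAdd 𝒜 μ) (hAm : A ∈ 𝒜) (hBm : B ∈ 𝒜) :
    μ (A ∪ B) = μ A + μ (B \ A) := by
  rw [← hμ.2.1 A hAm _ (hA.diff_mem hBm hAm) Set.disjoint_sdiff_right, Set.union_sdiff_self]

theorem inter_add_diff (hA : IsAlg 𝒜) (hμ : IsFinAdd 𝒜 μ) (hAm : A ∈ 𝒜) (hBm : B ∈ 𝒜) :
    μ (A ∩ B) + μ (A \ B) = μ A := by
  rw [← hμ.2.1 _ (hA.inter_mem hAm hBm) _ (hA.diff_mem hAm hBm)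
    (Set.disjoint_sdiff_right.mono_left Set.inter_subset_right), Set.inter_union_sdiff]

theorem mono (hA : IsAlg 𝒜) (hμ : IsFinAdd 𝒜 μ) (hμp : IsPos 𝒜 μ) (hAm : A ∈ 𝒜) (hBm : B ∈ 𝒜)
    (hAB : A ⊆ B) : μ A ≤ μ B := by
  have hsplit := hμ.add_diff hA hAm hBm
  rw [Set.union_eq_right.2 hAB] at hsplit
  linarith [hμp _ (hA.diff_mem hBm hAm)]

theorem union_le (hA : IsAlg 𝒜) (hμ : IsFinAdd 𝒜 μ) (hμp : IsPos 𝒜 μ) (hAm : A ∈ 𝒜)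
    (hBm : B ∈ 𝒜) : μ (A ∪ B) ≤ μ A + μ B := by
  rw [hμ.add_diff hA hAm hBm]
  linarith [hμ.mono hA hμp (hA.diff_mem hBm hAm) hBm Set.sdiff_subset]

theorem add {ν : Set Ω → ℝ} (hμ : IsFinAdd 𝒜 μ) (hν : IsFinAdd 𝒜 ν) : IsFinAdd 𝒜 (μ + ν) := by
  obtain ⟨hμ0, hμa, C, hC⟩ := hμ
  obtain ⟨hν0, hνa, D, hD⟩ := hν
  refine ⟨by simp [hμ0, hν0], fun A hAm B hBm hAB => ?_, C + D, fun A hAm => ?_⟩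
  · simp only [Pi.add_apply, hμa A hAm B hBm hAB, hνa A hAm B hBm hAB]
    ring
  · exact (abs_add_le _ _).trans (add_le_add (hC A hAm) (hD A hAm))

end IsFinAdd

section TotalVariation

variable {𝒜 : Set (Set Ω)} {μ : Set Ω → ℝ} {A B : Set Ω}

theorem tv_bddAbove (hA : IsAlg 𝒜) (hμ : IsFinAdd 𝒜 μ) (hAm : A ∈ 𝒜) :
    BddAbove {x | ∃ B ∈ 𝒜, B ⊆ A ∧ x = μ B - μ (A \ B)} := by
  obtain ⟨C, hC⟩ := hμ.2.2
  refine ⟨C + C, ?_⟩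
  rintro _ ⟨B, hBm, -, rfl⟩
  linarith [(abs_le.1 (hC B hBm)).2, (abs_le.1 (hC _ (hA.diff_mem hAm hBm))).1]

theorem sub_le_tv (hA : IsAlg 𝒜) (hμ : IsFinAdd 𝒜 μ) (hAm : A ∈ 𝒜) (hBm : B ∈ 𝒜) (hBA : B ⊆ A) :
    μ B - μ (A \ B) ≤ tv 𝒜 μ A :=
  le_csSup (tv_bddAbove hA hμ hAm) ⟨B, hBm, hBA, rfl⟩

theorem tv_nonneg (hA : IsAlg 𝒜) (hμ : IsFinAdd 𝒜 μ) (hAm : A ∈ 𝒜) : 0 ≤ tv 𝒜 μ A := by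
  have h₁ := sub_le_tv hA hμ hAm hAm subset_rfl
  have h₂ := sub_le_tv hA hμ hAm hA.empty_mem (Set.empty_subset A)
  simp only [Set.sdiff_self, Set.sdiff_empty, hμ.1] at h₁ h₂
  linarith

/-- A test set `C ⊆ A ∪ B` splits into test sets `C ∩ A ⊆ A` and `C ∩ B ⊆ B`, so the set of
values defining `tv 𝒜 μ (A ∪ B)` is the sum of those defining `tv 𝒜 μ A` and `tv 𝒜 μ B`. -/
theorem tv_union (hA : IsAlg 𝒜) (hμ : IsFinAdd 𝒜 μ) (hAm : A ∈ 𝒜) (hBm : B ∈ 𝒜)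
    (hAB : Disjoint A B) : tv 𝒜 μ (A ∪ B) = tv 𝒜 μ A + tv 𝒜 μ B := by
  have split : ∀ C₁ ∈ 𝒜, C₁ ⊆ A → ∀ C₂ ∈ 𝒜, C₂ ⊆ B →
      μ (C₁ ∪ C₂) - μ ((A ∪ B) \ (C₁ ∪ C₂)) = (μ C₁ - μ (A \ C₁)) + (μ C₂ - μ (B \ C₂)) := by
    intro C₁ hC₁ hC₁A C₂ hC₂ hC₂B
    have hdiff : (A ∪ B) \ (C₁ ∪ C₂) = (A \ C₁) ∪ (B \ C₂) := by
      ext x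
      have hxAB : x ∈ A → x ∉ B := fun h => Set.disjoint_left.1 hAB h
      have hxA := @hC₁A x
      have hxB := @hC₂B x
      simp only [Set.mem_sdiff, Set.mem_union]
      tauto
    rw [hdiff, hμ.2.1 _ hC₁ _ hC₂ (hAB.mono hC₁A hC₂B),
      hμ.2.1 _ (hA.diff_mem hAm hC₁) _ (hA.diff_mem hBm hC₂)
        (hAB.mono Set.sdiff_subset Set.sdiff_subset)]
    ring
  have nonempty : ∀ D : Set Ω, {x | ∃ C ∈ 𝒜, C ⊆ D ∧ x = μ C - μ (D \ C)}.Nonempty :=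
    fun D => ⟨_, ∅, hA.empty_mem, Set.empty_subset D, rfl⟩
  rw [tv, tv, tv, ← csSup_add (nonempty A) (tv_bddAbove hA hμ hAm) (nonempty B)
    (tv_bddAbove hA hμ hBm)]
  congr 1
  ext x
  rw [Set.mem_add]
  constructor
  · rintro ⟨C, hC, hCAB, rfl⟩
    have hC_eq : C = (C ∩ A) ∪ (C ∩ B) := by
      rw [← Set.inter_union_distrib_left, Set.inter_eq_left.2 hCAB]
    refine ⟨_, ⟨C ∩ A, hA.inter_mem hC hAm, Set.inter_subset_right, rfl⟩,
      _, ⟨C ∩ B, hA.inter_mem hC hBm, Set.inter_subset_right, rfl⟩, ?_⟩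
    rw [← split _ (hA.inter_mem hC hAm) Set.inter_subset_right _ (hA.inter_mem hC hBm)
      Set.inter_subset_right, ← hC_eq]
  · rintro ⟨_, ⟨C₁, hC₁, hC₁A, rfl⟩, _, ⟨C₂, hC₂, hC₂B, rfl⟩, rfl⟩
    exact ⟨C₁ ∪ C₂, hA.union_mem hC₁ hC₂, Set.union_subset_union hC₁A hC₂B,
      (split C₁ hC₁ hC₁A C₂ hC₂ hC₂B).symm⟩

theorem tv_empty (hA : IsAlg 𝒜) (hμ : IsFinAdd 𝒜 μ) : tv 𝒜 μ ∅ = 0 := by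
  have h := tv_union hA hμ hA.empty_mem hA.empty_mem (Set.disjoint_empty ∅)
  rw [Set.union_empty] at h
  linarith

theorem tv_le_tvNorm (hA : IsAlg 𝒜) (hμ : IsFinAdd 𝒜 μ) (hAm : A ∈ 𝒜) :
    tv 𝒜 μ A ≤ tvNorm 𝒜 μ := by
  have hsplit := tv_union hA hμ hAm (hA.compl_mem hAm) disjoint_compl_right
  rw [Set.union_compl_self] at hsplit
  rw [tvNorm, hsplit]
  linarith [tv_nonneg hA hμ (hA.compl_mem hAm)]

theorem tv_eq_of_isPos (hA : IsAlg 𝒜) (hμ : IsFinAdd 𝒜 μ) (hμp : IsPos 𝒜 μ) (hAm : A ∈ 𝒜) :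
    tv 𝒜 μ A = μ A := by
  refine le_antisymm (csSup_le ⟨_, ∅, hA.empty_mem, Set.empty_subset A, rfl⟩ ?_) ?_
  · rintro _ ⟨B, hBm, hBA, rfl⟩
    have hsplit := hμ.inter_add_diff hA hAm hBm
    rw [Set.inter_eq_right.2 hBA] at hsplit
    linarith [hμp _ (hA.diff_mem hAm hBm)]
  · simpa [hμ.1] using sub_le_tv hA hμ hAm hAm subset_rfl

theorem ac_iff_of_isPos {ν m : Set Ω → ℝ} (hA : IsAlg 𝒜) (hν : IsFinAdd 𝒜 ν) (hνp : IsPos 𝒜 ν)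
    (hm : IsFinAdd 𝒜 m) (hmp : IsPos 𝒜 m) :
    AC 𝒜 ν m ↔ ∀ ε > (0 : ℝ), ∃ δ > (0 : ℝ), ∀ E ∈ 𝒜, m E < δ → ν E < ε := by
  refine forall₂_congr fun ε _ => exists_congr fun δ => and_congr_right fun _ =>
    forall₂_congr fun E hE => ?_
  rw [tv_eq_of_isPos hA hν hνp hE, tv_eq_of_isPos hA hm hmp hE]

end TotalVariation

section NormalizedVariation

variable {𝒜 : Set (Set Ω)} {μ : Set Ω → ℝ}

theorem one_sup_tvNorm_pos (𝒜 : Set (Set Ω)) (μ : Set Ω → ℝ) : 0 < 1 ⊔ tvNorm 𝒜 μ :=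
  one_pos.trans_le le_sup_left

theorem isPos_nvar (hA : IsAlg 𝒜) (hμ : IsFinAdd 𝒜 μ) : IsPos 𝒜 (nvar 𝒜 μ) := fun _ hE =>
  div_nonneg (tv_nonneg hA hμ hE) (one_sup_tvNorm_pos 𝒜 μ).le

theorem nvar_le_one (hA : IsAlg 𝒜) (hμ : IsFinAdd 𝒜 μ) {E : Set Ω} (hE : E ∈ 𝒜) :
    nvar 𝒜 μ E ≤ 1 := by
  rw [nvar, div_le_one (one_sup_tvNorm_pos 𝒜 μ)]
  exact (tv_le_tvNorm hA hμ hE).trans le_sup_right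

theorem isFinAdd_nvar (hA : IsAlg 𝒜) (hμ : IsFinAdd 𝒜 μ) : IsFinAdd 𝒜 (nvar 𝒜 μ) := by
  refine ⟨by rw [nvar, tv_empty hA hμ, zero_div], fun A hAm B hBm hAB => ?_, 1, fun E hE => ?_⟩
  · rw [nvar, tv_union hA hμ hAm hBm hAB, add_div, nvar, nvar]
  · exact abs_le.2 ⟨by linarith [isPos_nvar hA hμ E hE], nvar_le_one hA hμ hE⟩

theorem ac_nvar_iff (hA : IsAlg 𝒜) (hμ : IsFinAdd 𝒜 μ) {m : Set Ω → ℝ} :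
    AC 𝒜 (nvar 𝒜 μ) m ↔ AC 𝒜 μ m := by
  have hd := one_sup_tvNorm_pos 𝒜 μ
  have htv : ∀ E ∈ 𝒜, tv 𝒜 (nvar 𝒜 μ) E = tv 𝒜 μ E / (1 ⊔ tvNorm 𝒜 μ) := fun E hE =>
    tv_eq_of_isPos hA (isFinAdd_nvar hA hμ) (isPos_nvar hA hμ) hE
  constructor
  · intro h ε hε
    obtain ⟨δ, hδ, h⟩ := h (ε / (1 ⊔ tvNorm 𝒜 μ)) (div_pos hε hd)
    refine ⟨δ, hδ, fun E hE hmE => ?_⟩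
    simpa [htv E hE, div_lt_div_iff_of_pos_right hd] using h E hE hmE
  · intro h ε hε
    obtain ⟨δ, hδ, h⟩ := h (ε * (1 ⊔ tvNorm 𝒜 μ)) (mul_pos hε hd)
    refine ⟨δ, hδ, fun E hE hmE => ?_⟩
    rw [htv E hE, div_lt_iff₀ hd]
    exact h E hE hmE

end NormalizedVariation

theorem hasSum_prod_of_nonneg {α β : Type*} {f : α × β → ℝ} (hf : 0 ≤ f) {g : α → ℝ} {a : ℝ}
    (hrow : ∀ k, HasSum (fun j => f (k, j)) (g k)) (hg : HasSum g a) : HasSum f a := by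
  have hs : Summable f := (summable_prod_of_nonneg hf).2
    ⟨fun k => (hrow k).summable, by simpa only [(hrow _).tsum_eq] using hg.summable⟩
  rw [hg.unique (hs.hasSum.prod_fiberwise hrow)]
  exact hs.hasSum

namespace MemAM

variable {𝒜 : Set (Set Ω)} {M : Set (Set Ω → ℝ)} {m : Set Ω → ℝ}

theorem hasSum (hA : IsAlg 𝒜) (hM : ∀ μ ∈ M, IsFinAdd 𝒜 μ) {μ : ℕ → Set Ω → ℝ} {α : ℕ → ℝ}
    (hμ : ∀ n, μ n ∈ M) (hα : ∀ n, 0 ≤ α n) (hα1 : HasSum α 1)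
    (hm : ∀ A, m A = ∑' n, α n * nvar 𝒜 (μ n) A) {E : Set Ω} (hE : E ∈ 𝒜) :
    HasSum (fun n => α n * nvar 𝒜 (μ n) E) (m E) := by
  rw [hm E]
  refine (Summable.of_nonneg_of_le (fun n => ?_) (fun n => ?_) hα1.summable).hasSum
  · exact mul_nonneg (hα n) (isPos_nvar hA (hM _ (hμ n)) E hE)
  · exact mul_le_of_le_one_right (hα n) (nvar_le_one hA (hM _ (hμ n)) hE)

theorem isPos (hA : IsAlg 𝒜) (hM : ∀ μ ∈ M, IsFinAdd 𝒜 μ) (hm : MemAM 𝒜 M m) : IsPos 𝒜 m := by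
  obtain ⟨μ, α, hμ, hα, -, hm⟩ := hm
  intro E hE
  rw [hm E]
  exact tsum_nonneg fun n => mul_nonneg (hα n) (isPos_nvar hA (hM _ (hμ n)) E hE)

theorem le_one (hA : IsAlg 𝒜) (hM : ∀ μ ∈ M, IsFinAdd 𝒜 μ) (hm : MemAM 𝒜 M m) {E : Set Ω}
    (hE : E ∈ 𝒜) : m E ≤ 1 := by
  obtain ⟨μ, α, hμ, hα, hα1, hm⟩ := hm
  refine hasSum_le (fun n => ?_) (hasSum hA hM hμ hα hα1 hm hE) hα1
  exact mul_le_of_le_one_right (hα n) (nvar_le_one hA (hM _ (hμ n)) hE)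

theorem isFinAdd (hA : IsAlg 𝒜) (hM : ∀ μ ∈ M, IsFinAdd 𝒜 μ) (hm : MemAM 𝒜 M m) :
    IsFinAdd 𝒜 m := by
  refine ⟨?_, fun A hAm B hBm hAB => ?_, 1, fun E hE =>
    abs_le.2 ⟨by linarith [hm.isPos hA hM E hE], hm.le_one hA hM hE⟩⟩
  all_goals obtain ⟨μ, α, hμ, hα, hα1, hm⟩ := hm
  · simp [hm, (isFinAdd_nvar hA (hM _ (hμ _))).1]
  · have hadd := (hasSum hA hM hμ hα hα1 hm hAm).add (hasSum hA hM hμ hα hα1 hm hBm)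
    simp only [← mul_add, ← (isFinAdd_nvar hA (hM _ (hμ _))).2.1 A hAm B hBm hAB] at hadd
    exact (hasSum hA hM hμ hα hα1 hm (hA.union_mem hAm hBm)).unique hadd

end MemAM

section MemAM

variable {𝒜 : Set (Set Ω)} {M : Set (Set Ω → ℝ)}

theorem memAM_nvar {μ : Set Ω → ℝ} (hμ : μ ∈ M) : MemAM 𝒜 M (nvar 𝒜 μ) :=
  ⟨fun _ => μ, fun n => if n = 0 then 1 else 0, fun _ => hμ,
    fun n => by positivity, hasSum_ite_eq 0 1, fun A => by simp [ite_mul]⟩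

theorem exists_memAM_hasSum (hA : IsAlg 𝒜) (hM : ∀ μ ∈ M, IsFinAdd 𝒜 μ) {m : ℕ → Set Ω → ℝ}
    (hm : ∀ k, MemAM 𝒜 M (m k)) {w : ℕ → ℝ} (hw : ∀ k, 0 ≤ w k) (hw1 : HasSum w 1) :
    ∃ m', MemAM 𝒜 M m' ∧ ∀ E ∈ 𝒜, HasSum (fun k => w k * m k E) (m' E) := by
  choose μ α hμ hα hα1 hmα using id hm
  let e : ℕ ≃ ℕ × ℕ := Nat.pairEquiv.symm
  let β : ℕ × ℕ → ℝ := fun p => w p.1 * α p.1 p.2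
  have hβ : 0 ≤ β := fun p => mul_nonneg (hw _) (hα _ _)
  refine ⟨fun A => ∑' n, (β ∘ e) n * nvar 𝒜 (μ (e n).1 (e n).2) A,
    ⟨fun n => μ (e n).1 (e n).2, β ∘ e, fun n => hμ _ _, fun n => hβ _, ?_, fun A => rfl⟩,
    fun E hE => ?_⟩
  · refine e.hasSum_iff.2 (hasSum_prod_of_nonneg hβ (fun k => ?_) hw1)
    simpa using (hα1 k).mul_left (w k)
  · let F : ℕ × ℕ → ℝ := fun p => β p * nvar 𝒜 (μ p.1 p.2) E
    have hF : 0 ≤ F := fun p => mul_nonneg (hβ p) (isPos_nvar hA (hM _ (hμ _ _)) E hE)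
    have hrow : ∀ k, HasSum (fun j => F (k, j)) (w k * m k E) := fun k => by
      simpa only [F, β, mul_assoc] using (MemAM.hasSum hA hM (hμ k) (hα k) (hα1 k) (hmα k) hE).mul_left (w k)
    have hcol : Summable fun k => w k * m k E := by
      refine Summable.of_nonneg_of_le (fun k => ?_) (fun k => ?_) hw1.summable
      · exact mul_nonneg (hw k) ((hm k).isPos hA hM E hE)
      · exact mul_le_of_le_one_right (hw k) ((hm k).le_one hA hM hE)
    change HasSum _ (∑' n, (F ∘ e) n)
    rw [(e.hasSum_iff.2 (hasSum_prod_of_nonneg hF hrow hcol.hasSum)).tsum_eq]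
    exact hcol.hasSum

theorem exists_memAM_midpoint (hA : IsAlg 𝒜) (hM : ∀ μ ∈ M, IsFinAdd 𝒜 μ) {m₁ m₂ : Set Ω → ℝ}
    (hm₁ : MemAM 𝒜 M m₁) (hm₂ : MemAM 𝒜 M m₂) :
    ∃ m, MemAM 𝒜 M m ∧ ∀ E ∈ 𝒜, m E = (m₁ E + m₂ E) / 2 := by
  let w : ℕ → ℝ := fun k => if k = 0 then 1 / 2 else if k = 1 then 1 / 2 else 0
  have hw : ∀ k, 2 ≤ k → w k = 0 := fun k hk => by
    simp only [w]
    rw [if_neg (by omega), if_neg (by omega)]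
  have hasSum_two : ∀ {f : ℕ → ℝ}, (∀ k, 2 ≤ k → f k = 0) → HasSum f (f 0 + f 1) := fun hf => by
    simpa [Finset.sum_range_succ] using hasSum_sum_of_ne_finset_zero (s := Finset.range 2)
      fun k hk => hf k (not_lt.1 (Finset.mem_range.not.1 hk))
  obtain ⟨m, hm, hmE⟩ := exists_memAM_hasSum hA hM (m := fun k => if k = 0 then m₁ else m₂)
    (fun k => by split_ifs <;> assumption) (w := w) (fun k => by positivity)
    (by convert hasSum_two hw using 1; norm_num [w])
  refine ⟨m, hm, fun E hE => (hmE E hE).unique ?_⟩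
  convert hasSum_two (f := fun k => w k * (if k = 0 then m₁ else m₂) E)
    fun k hk => by rw [hw k hk, zero_mul] using 1
  simp only [w, ↓reduceIte, one_ne_zero]
  ring

end MemAM

section SingularMass

variable {𝒜 : Set (Set Ω)} {l m : Set Ω → ℝ}

noncomputable def excess (𝒜 : Set (Set Ω)) (l m : Set Ω → ℝ) (c : ℝ) : ℝ :=
  sSup {x | ∃ E ∈ 𝒜, x = l E - c * m E}

/-- `singularMass 𝒜 l m = lim_{c → ∞} sup_E (l E - c * m E)` is the part of `l` that `m` does not
control; it vanishes exactly when `l ≪ m`. -/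
noncomputable def singularMass (𝒜 : Set (Set Ω)) (l m : Set Ω → ℝ) : ℝ :=
  sInf (excess 𝒜 l m '' Set.Ioi 0)

theorem excess_bddAbove (hA : IsAlg 𝒜) (hl : IsFinAdd 𝒜 l) (hlp : IsPos 𝒜 l) (hmp : IsPos 𝒜 m)
    {c : ℝ} (hc : 0 ≤ c) : BddAbove {x | ∃ E ∈ 𝒜, x = l E - c * m E} := by
  refine ⟨l Set.univ, ?_⟩
  rintro _ ⟨E, hE, rfl⟩
  linarith [hl.mono hA hlp hE hA.univ_mem (Set.subset_univ E), mul_nonneg hc (hmp E hE)]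

theorem sub_le_excess (hA : IsAlg 𝒜) (hl : IsFinAdd 𝒜 l) (hlp : IsPos 𝒜 l) (hmp : IsPos 𝒜 m)
    {c : ℝ} (hc : 0 ≤ c) {E : Set Ω} (hE : E ∈ 𝒜) : l E - c * m E ≤ excess 𝒜 l m c :=
  le_csSup (excess_bddAbove hA hl hlp hmp hc) ⟨E, hE, rfl⟩

theorem excess_nonneg (hA : IsAlg 𝒜) (hl : IsFinAdd 𝒜 l) (hlp : IsPos 𝒜 l) (hm : IsFinAdd 𝒜 m)
    (hmp : IsPos 𝒜 m) {c : ℝ} (hc : 0 ≤ c) : 0 ≤ excess 𝒜 l m c := by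
  simpa [hl.1, hm.1] using sub_le_excess hA hl hlp hmp hc hA.empty_mem

theorem singularMass_nonneg (hA : IsAlg 𝒜) (hl : IsFinAdd 𝒜 l) (hlp : IsPos 𝒜 l)
    (hm : IsFinAdd 𝒜 m) (hmp : IsPos 𝒜 m) : 0 ≤ singularMass 𝒜 l m :=
  le_csInf (Set.nonempty_Ioi.image _) <|
    Set.forall_mem_image.2 fun _ hc => excess_nonneg hA hl hlp hm hmp (le_of_lt hc)

theorem singularMass_le_excess (hA : IsAlg 𝒜) (hl : IsFinAdd 𝒜 l) (hlp : IsPos 𝒜 l)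
    (hm : IsFinAdd 𝒜 m) (hmp : IsPos 𝒜 m) {c : ℝ} (hc : 0 < c) :
    singularMass 𝒜 l m ≤ excess 𝒜 l m c :=
  csInf_le ⟨0, Set.forall_mem_image.2 fun _ hc => excess_nonneg hA hl hlp hm hmp (le_of_lt hc)⟩
    (Set.mem_image_of_mem _ hc)

theorem singularMass_anti (hA : IsAlg 𝒜) (hl : IsFinAdd 𝒜 l) (hlp : IsPos 𝒜 l)
    (hm : IsFinAdd 𝒜 m) (hmp : IsPos 𝒜 m) {m' : Set Ω → ℝ} (hm'p : IsPos 𝒜 m') {w : ℝ}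
    (hw : 0 < w) (hle : ∀ E ∈ 𝒜, w * m' E ≤ m E) : singularMass 𝒜 l m ≤ singularMass 𝒜 l m' := by
  refine le_csInf (Set.nonempty_Ioi.image _) (Set.forall_mem_image.2 fun c hc => ?_)
  have hc : (0 : ℝ) < c := hc
  refine (singularMass_le_excess hA hl hlp hm hmp (div_pos hc hw)).trans
    (csSup_le ⟨_, ∅, hA.empty_mem, rfl⟩ ?_)
  rintro _ ⟨E, hE, rfl⟩
  have hscale : c * m' E ≤ c / w * m E := by
    rw [div_mul_eq_mul_div, le_div_iff₀ hw, mul_assoc, mul_comm (m' E)]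
    exact mul_le_mul_of_nonneg_left (hle E hE) hc.le
  linarith [sub_le_excess hA hl hlp hm'p hc.le hE]

theorem exists_singularMass_sub_lt (hA : IsAlg 𝒜) (hl : IsFinAdd 𝒜 l) (hlp : IsPos 𝒜 l)
    (hm : IsFinAdd 𝒜 m) (hmp : IsPos 𝒜 m) {η ρ : ℝ} (hη : 0 < η) (hρ : 0 < ρ) :
    ∃ E ∈ 𝒜, singularMass 𝒜 l m - η < l E ∧ m E < ρ := by
  set K := (l Set.univ + η) / ρ
  have hK : 0 < K := div_pos (by linarith [hlp _ hA.univ_mem]) hρ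
  obtain ⟨_, ⟨E, hE, rfl⟩, hlE⟩ := exists_lt_of_lt_csSup
    (s := {x | ∃ E ∈ 𝒜, x = l E - K * m E}) ⟨_, ∅, hA.empty_mem, rfl⟩
    ((sub_lt_self _ hη).trans_le (singularMass_le_excess hA hl hlp hm hmp hK))
  have hKmE : 0 ≤ K * m E := mul_nonneg hK.le (hmp E hE)
  refine ⟨E, hE, by linarith, ?_⟩
  have hKρ : K * ρ = l Set.univ + η := div_mul_cancel₀ _ hρ.ne'
  refine lt_of_mul_lt_mul_left ?_ hK.le
  linarith [singularMass_nonneg hA hl hlp hm hmp, hl.mono hA hlp hE hA.univ_mem (Set.subset_univ E)]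

/-- If `ν ≪ m` failed, there would be sets `F` of tiny `m`-measure with `ν F ≥ ε`. Adjoining such
an `F` to a set `E` that nearly carries the singular mass of `l` relative to `m + ν` but has small
`m`- and `ν`-measure adds at least `δ₀ = δ(ε / 2)` to `l` at negligible `m`-cost, which pushes
`singularMass 𝒜 l m` above itself. -/
theorem ac_of_singularMass_le (hA : IsAlg 𝒜) (hl : IsFinAdd 𝒜 l) (hlp : IsPos 𝒜 l)
    {ν : Set Ω → ℝ} (hm : IsFinAdd 𝒜 m) (hmp : IsPos 𝒜 m) (hν : IsFinAdd 𝒜 ν)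
    (hνp : IsPos 𝒜 ν) (hνl : AC 𝒜 ν l) (hT : singularMass 𝒜 l m ≤ singularMass 𝒜 l (m + ν)) :
    AC 𝒜 ν m := by
  rw [ac_iff_of_isPos hA hν hνp hl hlp] at hνl
  rw [ac_iff_of_isPos hA hν hνp hm hmp]
  intro ε hε
  obtain ⟨δ₀, hδ₀, hνl⟩ := hνl (ε / 2) (half_pos hε)
  by_contra! hbad
  suffices h : ∀ c > 0, singularMass 𝒜 l m + δ₀ / 4 ≤ excess 𝒜 l m c by
    have hlt : singularMass 𝒜 l m + δ₀ / 4 ≤ singularMass 𝒜 l m :=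
      le_csInf (Set.nonempty_Ioi.image _) (Set.forall_mem_image.2 h)
    linarith
  intro c hc
  obtain ⟨E, hE, hlE, hmνE⟩ := exists_singularMass_sub_lt hA hl hlp (hm.add hν)
    (fun E hE => add_nonneg (hmp E hE) (hνp E hE)) (by positivity : 0 < δ₀ / 4)
    (lt_min (by positivity : 0 < δ₀ / (4 * c)) (half_pos hε))
  rw [Pi.add_apply, lt_min_iff] at hmνE
  have hmE : c * m E < δ₀ / 4 := by
    rw [← lt_div_iff₀' hc, div_div]
    linarith [hνp E hE]
  obtain ⟨F, hF, hmF, hνF⟩ := hbad (δ₀ / (4 * c)) (by positivity)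
  have hmF' : c * m F < δ₀ / 4 := by rwa [← lt_div_iff₀' hc, div_div]
  have hνFE : ε / 2 < ν (F \ E) := by
    linarith [hν.inter_add_diff hA hF hE, hmp E hE,
      hν.mono hA hνp (hA.inter_mem hF hE) hE Set.inter_subset_right]
  have hlFE : δ₀ ≤ l (F \ E) := le_of_not_gt fun h => (hνl _ (hA.diff_mem hF hE) h).not_gt hνFE
  have hEF := sub_le_excess hA hl hlp hmp hc.le (hA.union_mem hE hF)
  rw [hl.add_diff hA hE hF] at hEF
  have hmEF := mul_le_mul_of_nonneg_left (hm.union_le hA hmp hE hF) hc.le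
  linarith

end SingularMass

theorem exists_memAM_isMinOn_singularMass {𝒜 : Set (Set Ω)} (hA : IsAlg 𝒜)
    {M : Set (Set Ω → ℝ)} (hM : ∀ μ ∈ M, IsFinAdd 𝒜 μ) (hne : M.Nonempty) {l : Set Ω → ℝ}
    (hl : IsFinAdd 𝒜 l) (hlp : IsPos 𝒜 l) :
    ∃ m, MemAM 𝒜 M m ∧ IsMinOn (singularMass 𝒜 l) {m | MemAM 𝒜 M m} m := by
  set S := singularMass 𝒜 l '' {m | MemAM 𝒜 M m}
  have hS : S.Nonempty := hne.elim fun μ hμ => ⟨_, _, memAM_nvar hμ, rfl⟩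
  have hSbdd : BddBelow S := ⟨0, Set.forall_mem_image.2 fun _ hm =>
    singularMass_nonneg hA hl hlp (hm.isFinAdd hA hM) (hm.isPos hA hM)⟩
  have hseq : ∀ k : ℕ, ∃ m, MemAM 𝒜 M m ∧ singularMass 𝒜 l m < sInf S + 1 / (k + 1) :=
    fun k => by
      obtain ⟨_, ⟨m, hm, rfl⟩, h⟩ :=
        exists_lt_of_csInf_lt hS (lt_add_of_pos_right _ Nat.one_div_pos_of_nat)
      exact ⟨m, hm, h⟩
  choose m hm hmS using hseq
  obtain ⟨m', hm', hm'sum⟩ := exists_memAM_hasSum hA hM hm (w := fun k => 1 / 2 / 2 ^ k)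
    (fun k => by positivity) (hasSum_geometric_two' 1)
  refine ⟨m', hm', isMinOn_iff.2 fun m'' hm'' =>
    (le_of_forall_pos_lt_add fun ε hε => ?_).trans (csInf_le hSbdd ⟨m'', hm'', rfl⟩)⟩
  obtain ⟨k, hk⟩ := exists_nat_one_div_lt hε
  calc singularMass 𝒜 l m'
      ≤ singularMass 𝒜 l (m k) :=
        singularMass_anti hA hl hlp (hm'.isFinAdd hA hM) (hm'.isPos hA hM) ((hm k).isPos hA hM)
          (by positivity) fun E hE => le_hasSum (hm'sum E hE) k fun j _ =>
            mul_nonneg (by positivity) ((hm j).isPos hA hM E hE)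
    _ < sInf S + ε := by linarith [hmS k]

/-- Halmos–Savage: M is dominated iff M ≪ m for some m ∈ 𝐀(M). -/
theorem halmos_savage {Ω : Type*} (𝒜 : Set (Set Ω)) (hA : IsAlg 𝒜)
    (M : Set (Set Ω → ℝ)) (hM : ∀ μ ∈ M, IsFinAdd 𝒜 μ) (hne : M.Nonempty) :
    (∃ l : Set Ω → ℝ, IsFinAdd 𝒜 l ∧ IsPos 𝒜 l ∧ ∀ μ ∈ M, AC 𝒜 μ l) ↔
    (∃ m : Set Ω → ℝ, MemAM 𝒜 M m ∧ ∀ μ ∈ M, AC 𝒜 μ m) := by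
  constructor
  · rintro ⟨l, hl, hlp, hdom⟩
    obtain ⟨m, hm, hmin⟩ := exists_memAM_isMinOn_singularMass hA hM hne hl hlp
    refine ⟨m, hm, fun μ hμ => ?_⟩
    have hν := isFinAdd_nvar hA (hM μ hμ)
    obtain ⟨m', hm', hm'E⟩ := exists_memAM_midpoint hA hM hm (memAM_nvar hμ)
    have hT : singularMass 𝒜 l m ≤ singularMass 𝒜 l (m + nvar 𝒜 μ) :=
      (hmin hm').trans <| singularMass_anti hA hl hlp (hm'.isFinAdd hA hM) (hm'.isPos hA hM)
        (fun E hE => add_nonneg (hm.isPos hA hM E hE) (isPos_nvar hA (hM μ hμ) E hE))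
        one_half_pos fun E hE => by rw [hm'E E hE, Pi.add_apply]; linarith
    rw [← ac_nvar_iff hA (hM μ hμ)]
    exact ac_of_singularMass_le hA hl hlp (hm.isFinAdd hA hM) (hm.isPos hA hM) hν
      (isPos_nvar hA (hM μ hμ)) ((ac_nvar_iff hA (hM μ hμ)).2 (hdom μ hμ)) hT
  · rintro ⟨m, hm, hdom⟩
    exact ⟨m, hm.isFinAdd hA hM, hm.isPos hA hM, hdom⟩
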